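/- Let ψ₁, …, ψ_n be i.i.d. real random variables with mean μ and variance σ², and let ψ₍ₗ₎ denote the l-th largest order statistic. Then E[ψ₍ₗ₎] ≤ μ + σ·√((n−l)/l). -/

import Mathlib

/-!
The `l`-th largest of `n` reals is at most the average of the `l` largest ones. That average
exceeds the overall mean by `∑ wᵢ (fᵢ - c)` with weights `wᵢ = 1/l` on the top `l` indices
minus `1/n`; since `∑ wᵢ = 0` and `∑ wᵢ² = (n - l)/(l n)`, Cauchy–Schwarz bounds the excess by
`√((n - l)/l)` times the root mean square deviation about any `c`. Taking `c = m` and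
expectations, Jensen's inequality for `√` bounds the expected root mean square deviation by `σ`.
-/

open MeasureTheory ProbabilityTheory

/-- The descending rearrangement of a finite tuple of reals. -/
noncomputable def sortDesc {n : ℕ} (f : Fin n → ℝ) : Fin n → ℝ :=
  fun i => -(((fun j => -f j) ∘ Tuple.sort (fun j => -f j)) i)

open Finset

theorem Antitone.apply_le_sum_Iic_div {n : ℕ} {g : Fin n → ℝ} (hg : Antitone g) (k : Fin n) :
    g k ≤ (∑ j ∈ Iic k, g j) / #(Iic k) := by
  rw [le_div_iff₀ (by positivity), mul_comm, ← nsmul_eq_mul, ← sum_const]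
  exact sum_le_sum fun j hj => hg (mem_Iic.1 hj)

section SortDesc

variable {n : ℕ}

theorem sortDesc_apply (f : Fin n → ℝ) (i : Fin n) :
    sortDesc f i = f (Tuple.sort (fun j => -f j) i) := by
  simp [sortDesc]

theorem antitone_sortDesc (f : Fin n → ℝ) : Antitone (sortDesc f) := fun _ _ hij => by
  simpa [sortDesc] using Tuple.monotone_sort (fun j => -f j) hij

theorem sum_comp_sortDesc (f : Fin n → ℝ) (g : ℝ → ℝ) :
    ∑ i, g (sortDesc f i) = ∑ i, g (f i) := by
  simp only [sortDesc_apply]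
  exact Equiv.sum_comp (Tuple.sort (fun j => -f j)) (fun i => g (f i))

theorem abs_sortDesc_le_sum_abs (f : Fin n → ℝ) (k : Fin n) :
    |sortDesc f k| ≤ ∑ i, |f i| := by
  rw [sortDesc_apply]
  exact single_le_sum (fun i _ => abs_nonneg (f i)) (mem_univ _)

theorem sortDesc_le_iff (f : Fin n → ℝ) (k : Fin n) (t : ℝ) :
    sortDesc f k ≤ t ↔ #{i | t < f i} ≤ k := by
  set σ := Tuple.sort (fun j => -f j)
  have hσ : ∀ p, sortDesc f p = f (σ p) := sortDesc_apply f
  constructor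
  · intro h
    calc #{i | t < f i} ≤ #((Iio k).map σ.toEmbedding) := by
          refine card_le_card fun i hi => mem_map_equiv.2 (mem_Iio.2 ?_)
          by_contra! hki
          have := antitone_sortDesc f hki
          rw [hσ, Equiv.apply_symm_apply] at this
          exact (mem_filter.1 hi).2.not_ge (this.trans h)
      _ = k := by rw [card_map, Fin.card_Iio]
  · intro h
    by_contra! hk
    have hsub : (Iic k).map σ.toEmbedding ⊆ ({i | t < f i} : Finset (Fin n)) := by
      intro i hi
      obtain ⟨p, hp, rfl⟩ := mem_map.1 hi
      have := antitone_sortDesc f (mem_Iic.1 hp)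
      rw [hσ p] at this
      exact mem_filter.2 ⟨mem_univ _, hk.trans_le this⟩
    have := card_le_card hsub
    rw [card_map, Fin.card_Iic] at this
    omega

theorem measurable_sortDesc (k : Fin n) : Measurable fun f : Fin n → ℝ => sortDesc f k := by
  refine measurable_of_Iic fun t => ?_
  have hcount : Measurable fun f : Fin n → ℝ => #{i | t < f i} := by
    simp_rw [card_filter]
    exact measurable_sum _ fun i _ =>
      Measurable.ite (measurableSet_lt measurable_const (measurable_pi_apply i))
        measurable_const measurable_const
  convert hcount measurableSet_Iic using 1
  ext f
  exact sortDesc_le_iff f k t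

end SortDesc

theorem sum_div_card_le_mean_add_sqrt_mul_rms {ι : Type*} [Fintype ι] (g : ι → ℝ)
    (s : Finset ι) (hs : s.Nonempty) (c : ℝ) :
    (∑ j ∈ s, g j) / #s ≤ (∑ j, g j) / Fintype.card ι +
      √((Fintype.card ι - #s) / #s) * √((∑ j, (g j - c) ^ 2) / Fintype.card ι) := by
  classical
  set p : ℝ := (#s : ℝ)
  set N : ℝ := (Fintype.card ι : ℝ)
  have hp : 0 < p := by simp [p, hs.card_pos]
  have hpN : p ≤ N := by simp only [p, N]; exact_mod_cast card_le_univ s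
  have hN : 0 < N := hp.trans_le hpN
  have hgap : 0 ≤ (N - p) / p := div_nonneg (sub_nonneg.2 hpN) hp.le
  set w : ι → ℝ := fun j => (if j ∈ s then 1 / p else 0) - 1 / N
  -- `w` sums to zero, so centring at `c` costs nothing
  have hw_mul : ∑ j, w j * (g j - c) = (∑ j ∈ s, g j) / p - (∑ j, g j) / N := by
    simp only [w, sub_mul, ite_mul, zero_mul, sum_sub_distrib, sum_ite_mem, univ_inter,
      ← mul_sum, sum_const, card_univ, nsmul_eq_mul]
    field_simp
    ring
  have hw_sq : ∑ j, w j ^ 2 = (N - p) / p / N := by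
    have hw_sq_apply j :
        w j ^ 2 = (if j ∈ s then 1 / p ^ 2 - 2 / (p * N) else 0) + 1 / N ^ 2 := by
      simp only [w]; split_ifs <;> ring
    simp only [hw_sq_apply, sum_add_distrib, sum_ite_mem, univ_inter, sum_const, card_univ,
      nsmul_eq_mul]
    field_simp
    ring
  have hcs := Real.sum_mul_le_sqrt_mul_sqrt univ w (fun j => g j - c)
  rw [hw_mul, hw_sq] at hcs
  have : √((N - p) / p / N) * √(∑ j, (g j - c) ^ 2) =
      √((N - p) / p) * √((∑ j, (g j - c) ^ 2) / N) := by
    rw [← Real.sqrt_mul (by positivity), ← Real.sqrt_mul hgap]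
    congr 1
    ring
  linarith

theorem sortDesc_le_mean_add_sqrt_mul_rms {n : ℕ} (f : Fin n → ℝ) (l : ℕ) (hl : 1 ≤ l)
    (hln : l ≤ n) (c : ℝ) :
    sortDesc f ⟨l - 1, Nat.sub_one_lt_of_le hl hln⟩ ≤
      (∑ i, f i) / n + √((n - l) / l) * √((∑ i, (f i - c) ^ 2) / n) := by
  set k : Fin n := ⟨l - 1, Nat.sub_one_lt_of_le hl hln⟩
  have hcard : (#(Iic k) : ℝ) = l := by
    rw [Fin.card_Iic]; exact_mod_cast Nat.sub_add_cancel hl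
  calc sortDesc f k ≤ (∑ j ∈ Iic k, sortDesc f j) / #(Iic k) :=
        (antitone_sortDesc f).apply_le_sum_Iic_div k
    _ ≤ (∑ j, sortDesc f j) / Fintype.card (Fin n) +
          √((Fintype.card (Fin n) - #(Iic k)) / #(Iic k)) *
            √((∑ j, (sortDesc f j - c) ^ 2) / Fintype.card (Fin n)) :=
        sum_div_card_le_mean_add_sqrt_mul_rms _ _ ⟨k, mem_Iic.2 le_rfl⟩ c
    _ = _ := by
      rw [hcard, Fintype.card_fin, sum_comp_sortDesc f (fun x => (x - c) ^ 2),
        sum_comp_sortDesc f (fun x => x)]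

theorem integrable_sortDesc {Ω : Type*} [MeasurableSpace Ω] {μ : Measure Ω} {n : ℕ}
    {X : Fin n → Ω → ℝ} (hX : ∀ i, Integrable (X i) μ) (k : Fin n) :
    Integrable (fun ω => sortDesc (fun i => X i ω) k) μ :=
  (integrable_finsetSum _ fun i _ => (hX i).abs).mono'
    ((measurable_sortDesc k).comp_aemeasurable
      (aemeasurable_pi_lambda _ fun i => (hX i).aemeasurable)).aestronglyMeasurable
    (ae_of_all _ fun ω => abs_sortDesc_le_sum_abs (fun i => X i ω) k)

theorem MeasureTheory.Integrable.sqrt {Ω : Type*} [MeasurableSpace Ω] {μ : Measure Ω}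
    [IsFiniteMeasure μ] {V : Ω → ℝ} (hV : Integrable V μ) (hV0 : 0 ≤ᵐ[μ] V) :
    Integrable (fun ω => √(V ω)) μ := by
  refine ((memLp_two_iff_integrable_sq
    (Real.continuous_sqrt.comp_aestronglyMeasurable hV.aestronglyMeasurable)).2 ?_).integrable
    one_le_two
  exact hV.congr (hV0.mono fun ω h => (Real.sq_sqrt h).symm)

theorem integral_sqrt_le_sqrt_integral {Ω : Type*} [MeasurableSpace Ω] {μ : Measure Ω}
    [IsProbabilityMeasure μ] {V : Ω → ℝ} (hV : Integrable V μ) (hV0 : 0 ≤ᵐ[μ] V) :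
    ∫ ω, √(V ω) ∂μ ≤ √(∫ ω, V ω ∂μ) :=
  Real.strictConcaveOn_sqrt.concaveOn.le_map_integral Real.continuous_sqrt.continuousOn
    isClosed_Ici hV0 hV (hV.sqrt hV0)

/-- Distribution-free bound on expected order statistics: if `ψ₁, …, ψ_n` are i.i.d. with
mean `m` and variance `σ²`, the `l`-th largest order statistic satisfies
`E[ψ₍ₗ₎] ≤ m + σ·√((n−l)/l)`. -/
theorem expected_order_statistic_bound
    {Ω : Type*} [MeasurableSpace Ω] (μ : Measure Ω) [IsProbabilityMeasure μ]
    (n : ℕ) (l : ℕ) (hl : 1 ≤ l) (hln : l ≤ n)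
    (X : Fin n → Ω → ℝ)
    (hL2 : ∀ i, MemLp (X i) 2 μ)
    (m σ : ℝ) (hσ : 0 ≤ σ)
    (hmean : ∀ i, (∫ ω, X i ω ∂μ) = m)
    (hvar : ∀ i, variance (X i) μ = σ ^ 2) :
    (∫ ω, sortDesc (fun i => X i ω) ⟨l - 1, by omega⟩ ∂μ) ≤
      m + σ * Real.sqrt (((n : ℝ) - l) / l) := by
  have hn : (n : ℝ) ≠ 0 := by exact_mod_cast (by omega : n ≠ 0)
  have hX i : Integrable (X i) μ := (hL2 i).integrable one_le_two
  have hsq i : Integrable (fun ω => (X i ω - m) ^ 2) μ :=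
    ((hL2 i).sub (memLp_const m)).integrable_sq
  have hvar' i : ∫ ω, (X i ω - m) ^ 2 ∂μ = σ ^ 2 := by
    rw [← hvar i, variance_eq_integral (hL2 i).aemeasurable, hmean i]
  have hA : Integrable (fun ω => (∑ i, X i ω) / n) μ :=
    (integrable_finsetSum _ fun i _ => hX i).div_const _
  have hEA : ∫ ω, (∑ i, X i ω) / n ∂μ = m := by
    simp [integral_div, integral_finsetSum _ fun i _ => hX i, hmean, field]
  set V : Ω → ℝ := fun ω => (∑ i, (X i ω - m) ^ 2) / n
  have hV : Integrable V μ := (integrable_finsetSum _ fun i _ => hsq i).div_const _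
  have hV0 : 0 ≤ᵐ[μ] V := ae_of_all _ fun ω => by positivity
  have hEV : ∫ ω, V ω ∂μ = σ ^ 2 := by
    simp [V, integral_div, integral_finsetSum _ fun i _ => hsq i, hvar', field]
  calc (∫ ω, sortDesc (fun i => X i ω) ⟨l - 1, by omega⟩ ∂μ)
      ≤ ∫ ω, ((∑ i, X i ω) / n + √((n - l) / l) * √(V ω)) ∂μ :=
        integral_mono (integrable_sortDesc hX ⟨l - 1, by omega⟩)
          (hA.add ((hV.sqrt hV0).const_mul _))
          fun ω => sortDesc_le_mean_add_sqrt_mul_rms _ l hl hln m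
    _ = m + √((n - l) / l) * ∫ ω, √(V ω) ∂μ := by
        rw [integral_add hA ((hV.sqrt hV0).const_mul _), integral_const_mul, hEA]
    _ ≤ m + √((n - l) / l) * √(∫ ω, V ω ∂μ) := by
        gcongr
        exact integral_sqrt_le_sqrt_integral hV hV0
    _ = m + σ * √((n - l) / l) := by rw [hEV, Real.sqrt_sq hσ, mul_comm]
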